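/- Let B be a branch at a vertex v of a tree of spheres cover F, attached at a point a₀ ∈ S_v of local degree 1, and suppose F(B) is a branch. Then B contains no critical leaf and F : B → F(B) is a bijection. -/

import Mathlib

/-!
Every vertex of `B` has `vdeg = 1`, by induction outward from `v` along edges `p — x` with
`edeg p x = 1` such that `F v` lies behind `F p` as seen from `F x`. A second neighbour `u ≠ p`
of `x` over `F p` is impossible: lifting paths from `F u` puts a preimage of `F v` into the branch
of `x` at `u`, which lies inside `B`, whereas `F(B)` avoids `F v`. Hence the fibre over `F p` at
`x` is `{p}` and `vdeg x = edeg x p = 1`; by Riemann–Hurwitz every edge at `x` then has local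
degree `1` and `F` is injective on the neighbours of `x`, which carries the invariant to the next
edges. Finally, a map of trees that is locally injective along a path never backtracks, so it maps
the paths of `B` to paths and is injective on `B`.
-/

open scoped Classical

/-- `x` and `y` are on the same side of vertex `v` in the graph `G`
(there is a walk from `x` to `y` avoiding `v`). -/
def SameSide {V : Type*} (G : SimpleGraph V) (v x y : V) : Prop :=
  ∃ p : G.Walk x y, v ∉ p.support

/-- The branch of `s` at the vertex `v`: the connected component of `G − {v}` containing `s`. -/
def Branch {V : Type*} (G : SimpleGraph V) (v s : V) : Set V :=
  {u | ∃ p : G.Walk s u, v ∉ p.support}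

/-- The (open) annulus `]]v₁,v₂[[`, the intersection of the branches `B_{v₁}(v₂)` and
`B_{v₂}(v₁)`. -/
def Annulus {V : Type*} (G : SimpleGraph V) (v₁ v₂ : V) : Set V :=
  Branch G v₁ v₂ ∩ Branch G v₂ v₁

/-- `v` is a leaf of `G` (exactly one neighbour). -/
def IsLf {V : Type*} (G : SimpleGraph V) (v : V) : Prop := ∃! u, G.Adj v u

/-- `A` is a connected component of the subset `S` of vertices of `G`. -/
def IsCompOf {V : Type*} (G : SimpleGraph V) (A S : Set V) : Prop :=
  A ⊆ S ∧
  (∀ a ∈ A, ∀ b ∈ A, ∃ p : G.Walk a b, ∀ x ∈ p.support, x ∈ S) ∧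
  (∀ a ∈ A, ∀ u, (∃ p : G.Walk a u, ∀ x ∈ p.support, x ∈ S) → u ∈ A)

/-- A combinatorial model of a (holomorphic) cover `F : T^Y → T^Z` between trees of spheres:
a map of trees sending leaves to leaves and internal vertices to internal vertices, together
with local degrees `edeg` along edges and degrees `vdeg` of the sphere maps `f_v`, subject to
the fiber-counting condition and the local Riemann–Hurwitz relation (all critical points of
`f_v` are at attaching points of edges, since `f_v : S_v − Y_v → S_{F v} − Z_{F v}` is a
covering map). -/
structure STCover (V W : Type*) [Fintype V] [Fintype W] where
  TY : SimpleGraph V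
  TZ : SimpleGraph W
  treeY : TY.IsTree
  treeZ : TZ.IsTree
  valY : ∀ v : V, IsLf TY v ∨ (∃ a b c : V, a ≠ b ∧ b ≠ c ∧ a ≠ c ∧
    TY.Adj v a ∧ TY.Adj v b ∧ TY.Adj v c)
  F : V → W
  map_adj : ∀ {u v : V}, TY.Adj u v → TZ.Adj (F u) (F v)
  map_leaf : ∀ v : V, IsLf TY v → IsLf TZ (F v)
  map_internal : ∀ v : V, ¬ IsLf TY v → ¬ IsLf TZ (F v)
  edeg : V → V → ℕ
  edeg_pos : ∀ {u v : V}, TY.Adj u v → 1 ≤ edeg u v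
  edeg_symm : ∀ u v : V, edeg u v = edeg v u
  vdeg : V → ℕ
  vdeg_pos : ∀ v : V, 1 ≤ vdeg v
  fiber_sum : ∀ v : V, ∀ w' : W, ¬ IsLf TY v → TZ.Adj (F v) w' →
    ∑ u ∈ Finset.univ.filter (fun u => TY.Adj v u ∧ F u = w'), edeg v u = vdeg v
  RH_local : ∀ v : V, ¬ IsLf TY v →
    ∑ u ∈ Finset.univ.filter (fun u => TY.Adj v u), (edeg v u - 1) = 2 * (vdeg v - 1)
  leaf_vdeg : ∀ v u : V, IsLf TY v → TY.Adj v u → vdeg v = edeg v u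

/-- A critical leaf of a cover between trees of spheres. -/
def STCover.CritLeaf {V W : Type*} [Fintype V] [Fintype W] (C : STCover V W) (v : V) : Prop :=
  IsLf C.TY v ∧ 2 ≤ C.vdeg v

open SimpleGraph

section Branch

variable {V : Type*} {G : SimpleGraph V} {v s x p u y z : V}

lemma ne_of_mem_branch (hy : y ∈ Branch G v s) : y ≠ v := by
  rintro rfl
  obtain ⟨q, hq⟩ := hy
  exact hq q.end_mem_support

lemma self_mem_branch (h : s ≠ v) : s ∈ Branch G v s :=
  ⟨Walk.nil, by simpa using h.symm⟩

lemma mem_branch_of_mem_support {a b : V} (ha : a ∈ Branch G v s) (q : G.Walk a b)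
    (hq : v ∉ q.support) (hz : z ∈ q.support) : z ∈ Branch G v s := by
  obtain ⟨r, hr⟩ := ha
  refine ⟨r.append (q.takeUntil z hz), fun hv => ?_⟩
  rcases (Walk.mem_support_append_iff _ _).1 hv with hv | hv
  · exact hr hv
  · exact hq (q.support_takeUntil_subset_support hz hv)

lemma exists_isPath_of_mem_branch {a b : V} (ha : a ∈ Branch G v s) (hb : b ∈ Branch G v s) :
    ∃ P : G.Walk a b, P.IsPath ∧ ∀ z ∈ P.support, z ∈ Branch G v s := by
  obtain ⟨qa, hqa⟩ := ha
  obtain ⟨qb, hqb⟩ := hb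
  have hv : v ∉ (qa.reverse.append qb).support := by
    rw [Walk.mem_support_append_iff, Walk.support_reverse, List.mem_reverse]
    exact not_or.2 ⟨hqa, hqb⟩
  refine ⟨_, (qa.reverse.append qb).toPath.2, fun z hz => ?_⟩
  exact mem_branch_of_mem_support ⟨qa, hqa⟩ _
    (fun h => hv (Walk.support_toPath_subset_support _ h)) hz

namespace SimpleGraph.IsAcyclic

lemma disjoint_branch (hG : G.IsAcyclic) (hxp : G.Adj x p) (hxu : G.Adj x u) (hpu : p ≠ u) :
    Disjoint (Branch G x p) (Branch G x u) := by
  refine Set.disjoint_left.2 fun y ⟨qp, hqp⟩ ⟨qu, hqu⟩ => hpu ?_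
  have hx : x ∉ (qp.append qu.reverse).support := by
    rw [Walk.mem_support_append_iff, Walk.support_reverse, List.mem_reverse]
    exact not_or.2 ⟨hqp, hqu⟩
  set P := (qp.append qu.reverse).toPath
  have hP : (Walk.cons hxp P.1).IsPath :=
    P.2.cons fun h => hx (Walk.support_toPath_subset_support _ h)
  simpa using (hG.eq_snd_of_adj_start hP hxu (Walk.end_mem_support _)).symm

lemma mem_branch_of_mem_branch (hG : G.IsAcyclic) (hxp : G.Adj x p) (hxu : G.Adj x u)
    (hpu : p ≠ u) (hz : z ∈ Branch G x p) : z ∈ Branch G u x := by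
  obtain ⟨q, hq⟩ := hz
  have hu : u ∉ q.support := fun hu =>
    Set.disjoint_left.1 (hG.disjoint_branch hxp hxu hpu)
      (mem_branch_of_mem_support (self_mem_branch hxp.ne') q hq hu) (self_mem_branch hxu.ne')
  exact ⟨Walk.cons hxp q, by simpa using ⟨hxu.ne', hu⟩⟩

end SimpleGraph.IsAcyclic

end Branch

lemma SimpleGraph.Walk.IsPath.map_of_injOn_neighborSet {V W : Type*} {G : SimpleGraph V}
    {H : SimpleGraph W} (hH : H.IsAcyclic) (f : G →g H) {a b : V} {P : G.Walk a b}
    (hP : P.IsPath) (hf : ∀ x ∈ P.support, Set.InjOn f (G.neighborSet x)) : (P.map f).IsPath := by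
  induction P with
  | nil => simp
  | @cons a c b h q ih =>
    have hq : (q.map f).IsPath :=
      ih hP.of_cons fun x hx => hf x (List.mem_cons_of_mem _ hx)
    cases q with
    | nil => simpa [Walk.map_cons] using (f.map_adj h).ne
    | @cons _ d _ h' q' =>
      -- in a forest, a walk whose consecutive edges differ is a path
      rw [hH.isPath_iff_isChain] at hq ⊢
      simp only [Walk.map_cons, Walk.edges_cons] at hq ⊢
      rw [List.isChain_cons_cons]
      refine ⟨fun he => ?_, hq⟩
      rcases Sym2.eq_iff.1 he with ⟨hab, -⟩ | ⟨had, -⟩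
      · exact (f.map_adj h).ne hab
      · have : a = d := hf c (by simp) h.symm h' had
        exact ((Walk.cons_isPath_iff _ _).1 hP).2 (by simp [this])

lemma injOn_branch_of_injOn_neighborSet {V W : Type*} {G : SimpleGraph V} {H : SimpleGraph W}
    (hH : H.IsAcyclic) (f : G →g H) {v s : V}
    (hf : ∀ x ∈ Branch G v s, Set.InjOn f (G.neighborSet x)) : Set.InjOn f (Branch G v s) := by
  intro a ha b hb hab
  obtain ⟨P, hP, hPB⟩ := exists_isPath_of_mem_branch ha hb
  have hnodup := (hP.map_of_injOn_neighborSet hH f fun x hx => hf x (hPB x hx)).support_nodup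
  rw [Walk.support_map] at hnodup
  exact List.inj_on_of_nodup_map hnodup P.start_mem_support P.end_mem_support hab

namespace STCover

variable {V W : Type*} [Fintype V] [Fintype W] (C : STCover V W)

def hom : C.TY →g C.TZ := ⟨C.F, C.map_adj⟩

lemma edeg_eq_one_of_vdeg_eq_one {x u : V} (hx : C.vdeg x = 1) (hxu : C.TY.Adj x u) :
    C.edeg x u = 1 := by
  by_cases hlf : IsLf C.TY x
  · rw [← C.leaf_vdeg x u hlf hxu, hx]
  · have hRH := C.RH_local x hlf
    rw [hx, Nat.sub_self, Nat.mul_zero, Finset.sum_eq_zero_iff] at hRH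
    have := hRH u (by simpa using hxu)
    have := C.edeg_pos hxu
    omega

lemma injOn_neighborSet_of_vdeg_eq_one {x : V} (hx : C.vdeg x = 1) :
    Set.InjOn C.F (C.TY.neighborSet x) := by
  intro a (ha : C.TY.Adj x a) b (hb : C.TY.Adj x b) hab
  by_contra hne
  have hint : ¬ IsLf C.TY x := fun ⟨t, _, ht⟩ => hne ((ht a ha).trans (ht b hb).symm)
  have hsum := C.fiber_sum x (C.F a) hint (C.map_adj ha)
  have hsub : ({a, b} : Finset V) ⊆
      Finset.univ.filter (fun u => C.TY.Adj x u ∧ C.F u = C.F a) := by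
    simp [Finset.insert_subset_iff, ha, hb, hab]
  have := Finset.sum_le_sum_of_subset (f := C.edeg x) hsub
  rw [Finset.sum_pair hne, hsum, hx] at this
  have := C.edeg_pos ha
  have := C.edeg_pos hb
  omega

lemma exists_adj_map_eq {y : V} {w : W} (h : C.TZ.Adj (C.F y) w) :
    ∃ z, C.TY.Adj y z ∧ C.F z = w := by
  by_cases hlf : IsLf C.TY y
  · obtain ⟨t', -, ht'⟩ := C.map_leaf y hlf
    obtain ⟨t, hyt, -⟩ := hlf
    exact ⟨t, hyt, (ht' _ (C.map_adj hyt)).trans (ht' w h).symm⟩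
  · have hsum := C.fiber_sum y w hlf h
    have : (∑ u ∈ Finset.univ.filter (fun u => C.TY.Adj y u ∧ C.F u = w), C.edeg y u) ≠ 0 := by
      have := C.vdeg_pos y
      omega
    obtain ⟨z, hz, -⟩ := Finset.exists_ne_zero_of_sum_ne_zero this
    exact ⟨z, (Finset.mem_filter.1 hz).2⟩

lemma exists_walk_lift {a b : W} (q : C.TZ.Walk a b) {y : V} (hy : C.F y = a) :
    ∃ z, C.F z = b ∧ ∃ r : C.TY.Walk y z, r.support.map C.F = q.support := by
  induction q generalizing y with
  | nil => exact ⟨y, hy, Walk.nil, by simp [hy]⟩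
  | cons h q ih =>
    obtain ⟨z₁, hyz₁, hz₁⟩ := C.exists_adj_map_eq (hy ▸ h)
    obtain ⟨z, hz, r, hr⟩ := ih hz₁
    exact ⟨z, hz, Walk.cons hyz₁ r, by simp [hr, hy]⟩

lemma branch_subset_image (x u : V) :
    Branch C.TZ (C.F x) (C.F u) ⊆ C.F '' Branch C.TY x u := by
  rintro w ⟨q, hq⟩
  obtain ⟨z, hz, r, hr⟩ := C.exists_walk_lift q rfl
  refine ⟨z, ⟨r, fun hx => hq ?_⟩, hz⟩
  rw [← hr]
  exact List.mem_map_of_mem hx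

lemma vdeg_eq_one_of_edeg_eq_one {p x : V} (hpx : C.TY.Adj p x) (hpx1 : C.edeg p x = 1) {w : W}
    (hw : w ∈ Branch C.TZ (C.F x) (C.F p)) (hB : ∀ y ∈ Branch C.TY p x, C.F y ≠ w) :
    C.vdeg x = 1 := by
  by_cases hlf : IsLf C.TY x
  · rw [C.leaf_vdeg x p hlf hpx.symm, C.edeg_symm, hpx1]
  · have hfib : Finset.univ.filter (fun u => C.TY.Adj x u ∧ C.F u = C.F p) = {p} := by
      ext u
      simp only [Finset.mem_filter, Finset.mem_univ, true_and, Finset.mem_singleton]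
      refine ⟨fun ⟨hxu, hFu⟩ => ?_, fun hup => ⟨hup ▸ hpx.symm, hup ▸ rfl⟩⟩
      by_contra hup
      obtain ⟨y, hy, hFy⟩ := C.branch_subset_image x u (hFu ▸ hw)
      exact hB y (C.treeY.isAcyclic.mem_branch_of_mem_branch hxu hpx.symm hup hy) hFy
    have hsum := C.fiber_sum x (C.F p) hlf (C.map_adj hpx.symm)
    rwa [hfib, Finset.sum_singleton, C.edeg_symm, hpx1, eq_comm] at hsum

lemma vdeg_eq_one_of_isPath {p x y : V} (P : C.TY.Walk x y) (hP : P.IsPath) (hp : p ∉ P.support)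
    (hpx : C.TY.Adj p x) (hpx1 : C.edeg p x = 1) {w : W}
    (hw : w ∈ Branch C.TZ (C.F x) (C.F p)) (hB : ∀ y ∈ Branch C.TY p x, C.F y ≠ w) :
    C.vdeg y = 1 := by
  induction P generalizing p with
  | nil => exact C.vdeg_eq_one_of_edeg_eq_one hpx hpx1 hw hB
  | @cons x x' y hxx' P ih =>
    have hx := C.vdeg_eq_one_of_edeg_eq_one hpx hpx1 hw hB
    have hx'p : x' ≠ p := fun h => hp (h ▸ List.mem_cons_of_mem _ P.start_mem_support)
    have hFx'p : C.F p ≠ C.F x' := fun h =>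
      hx'p (C.injOn_neighborSet_of_vdeg_eq_one hx hxx' hpx.symm h.symm)
    exact ih hP.of_cons ((Walk.cons_isPath_iff _ _).1 hP).2 hxx'
      (C.edeg_eq_one_of_vdeg_eq_one hx hxx')
      (C.treeZ.isAcyclic.mem_branch_of_mem_branch (C.map_adj hpx.symm) (C.map_adj hxx') hFx'p hw)
      fun z hz => hB z (C.treeY.isAcyclic.mem_branch_of_mem_branch hxx' hpx.symm hx'p hz)

lemma vdeg_eq_one_of_mem_branch {p x : V} (hpx : C.TY.Adj p x) (hpx1 : C.edeg p x = 1) {w : W}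
    (hw : w ∈ Branch C.TZ (C.F x) (C.F p)) (hB : ∀ y ∈ Branch C.TY p x, C.F y ≠ w) {y : V}
    (hy : y ∈ Branch C.TY p x) : C.vdeg y = 1 := by
  obtain ⟨q, hq⟩ := hy
  exact C.vdeg_eq_one_of_isPath q.toPath.1 q.toPath.2
    (fun h => hq (Walk.support_toPath_subset_support _ h)) hpx hpx1 hw hB

end STCover

/-- if a branch `B` at `v`, attached at a point of local degree `1`, maps to a
branch of `T^Z`, then `B` contains no critical leaf and `F : B → F(B)` is a bijection. -/
theorem stmt12 {V W : Type*} [Fintype V] [Fintype W] (C : STCover V W)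
    (v s : V) (hadj : C.TY.Adj v s)
    (hd1 : C.edeg v s = 1)
    (hbr : ∃ s' : W, C.F '' Branch C.TY v s = Branch C.TZ (C.F v) s') :
    (∀ u ∈ Branch C.TY v s, ¬ C.CritLeaf u) ∧
    Set.InjOn C.F (Branch C.TY v s) := by
  obtain ⟨s', hs'⟩ := hbr
  have hFv : ∀ y ∈ Branch C.TY v s, C.F y ≠ C.F v := fun y hy =>
    ne_of_mem_branch (hs' ▸ Set.mem_image_of_mem C.F hy)
  have hdeg : ∀ y ∈ Branch C.TY v s, C.vdeg y = 1 := fun y hy =>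
    C.vdeg_eq_one_of_mem_branch hadj hd1 (self_mem_branch (C.map_adj hadj).ne) hFv hy
  refine ⟨fun u hu hcrit => absurd hcrit.2 (by rw [hdeg u hu]; omega), ?_⟩
  exact injOn_branch_of_injOn_neighborSet C.treeZ.isAcyclic C.hom fun x hx =>
    C.injOn_neighborSet_of_vdeg_eq_one (hdeg x hx)
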